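/- Let R be a subsuperring of a superring S and suppose S is integral over R in the sense that every even element x ∈ S₀ satisfies a monic polynomial equation x^n + a_{n-1}x^{n-1} + ⋯ + a_0 = 0 with coefficients a_i ∈ R. Let v be a valuation on R and w a valuation on S such that A_v ⊆ A_w and 𝔭_v = A_v ∩ 𝔭_w. Then S·supp(v) ⊆ supp(w); in particular supp(v) ⊆ supp(w), so w is an extension of v to S. -/

import Mathlib

universe u

/-- A superring: a `ZMod 2`-graded ring `R = R₀ ⊕ R₁` which is supercommutative
(`R₀` is central and every odd element squares to zero). -/
structure IsSuperring {R : Type*} [Ring R] (𝒜 : ZMod 2 → AddSubgroup R) : Prop where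
  one_mem : (1 : R) ∈ 𝒜 0
  mul_mem : ∀ {i j : ZMod 2} {x y : R}, x ∈ 𝒜 i → y ∈ 𝒜 j → x * y ∈ 𝒜 (i + j)
  decompose : ∀ x : R, ∃ x0 ∈ 𝒜 0, ∃ x1 ∈ 𝒜 1, x = x0 + x1
  unique_decomp : ∀ x0 ∈ 𝒜 0, ∀ x1 ∈ 𝒜 1, x0 + x1 = 0 → x0 = 0 ∧ x1 = 0
  even_central : ∀ x ∈ 𝒜 0, ∀ y : R, x * y = y * x
  odd_sq : ∀ x ∈ 𝒜 1, x * x = 0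

/-- A (Manis) valuation on a ring `R`: a surjective map `v : R → Γ ∪ {∞}`
(`∞ = ⊤` is absorbing and greater than every element of the totally ordered
abelian group `Γ`) with `v 0 = ∞`, `v 1 = 0`, `v (x*y) = v x + v y` and
`v (x+y) ≥ min (v x) (v y)`. -/
structure IsValuation {R : Type*} [Ring R] {Γ : Type*} [AddCommGroup Γ] [LinearOrder Γ] [IsOrderedAddMonoid Γ]
    (v : R → WithTop Γ) : Prop where
  surjective : Function.Surjective v
  map_zero : v 0 = ⊤
  map_one : v 1 = 0
  map_mul : ∀ x y : R, v (x * y) = v x + v y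
  min_le_add : ∀ x y : R, min (v x) (v y) ≤ v (x + y)

/-- `A_v = {x : v x ≥ 0}`. -/
def valRing {R : Type*} [Ring R] {Γ : Type*} [AddCommGroup Γ] [LinearOrder Γ] [IsOrderedAddMonoid Γ]
    (v : R → WithTop Γ) : Set R := {x : R | 0 ≤ v x}

/-- `𝔭_v = {x : v x > 0}`. -/
def valIdeal {R : Type*} [Ring R] {Γ : Type*} [AddCommGroup Γ] [LinearOrder Γ] [IsOrderedAddMonoid Γ]
    (v : R → WithTop Γ) : Set R := {x : R | 0 < v x}

/-- `supp v = v⁻¹(∞)`. -/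
def valSupp {R : Type*} [Ring R] {Γ : Type*} [AddCommGroup Γ] [LinearOrder Γ] [IsOrderedAddMonoid Γ]
    (v : R → WithTop Γ) : Set R := {x : R | v x = ⊤}

/-!
Odd elements square to zero, so they lie in `supp w`; hence `w` already takes every value on
`S₀`. A root of a monic equation whose coefficients have value `> δ` (with `δ ≤ 0`) has value
`> δ`, so integrality of `S₀` over `R` makes `w ∘ ι` unbounded below. If `x ∈ supp v` had
finite value `d = w (ι x)`, then every `a * x` would lie in `𝔭_v ⊆ 𝔭_w`, forcing
`w (ι a) > -d`. Once `supp v ⊆ supp w`, the domination conditions give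
`v x ≤ v y ↔ w (ι x) ≤ w (ι y)` (translate by a `z` with `v (x * z) = 0`), and such an order
equivalence induces an order embedding of the value groups.
-/

namespace IsValuation

variable {R : Type*} [Ring R] {Γ : Type*} [AddCommGroup Γ] [LinearOrder Γ] [IsOrderedAddMonoid Γ]
  {v : R → WithTop Γ}

def toAddValuation (hv : IsValuation v) : AddValuation R (WithTop Γ) :=
  AddValuation.of v hv.map_zero hv.map_one hv.min_le_add hv.map_mul

@[simp]
theorem toAddValuation_apply (hv : IsValuation v) (x : R) : hv.toAddValuation x = v x := rfl

theorem map_eq_top_of_mul_self_eq_zero (hv : IsValuation v) {x : R} (hx : x * x = 0) :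
    v x = ⊤ := by
  have h := hv.map_mul x x
  rw [hx, hv.map_zero, eq_comm, WithTop.add_eq_top, or_self] at h
  exact h

theorem map_add_of_map_eq_top (hv : IsValuation v) (x : R) {y : R} (hy : v y = ⊤) :
    v (x + y) = v x := by
  have hy' : v (-y) = ⊤ := (hv.toAddValuation.map_neg y).trans hy
  refine le_antisymm ?_ ?_
  · simpa [hy'] using hv.min_le_add (x + y) (-y)
  · simpa [hy] using hv.min_le_add x y

/-- If `v x ≤ δ`, the leading term `x ^ n` has strictly smaller value than all the others. -/
theorem lt_map_of_monic_eq_zero (hv : IsValuation v) {δ : Γ} (hδ : δ ≤ 0) {n : ℕ} {c : ℕ → R}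
    {x : R} (hc : ∀ i < n, (δ : WithTop Γ) < v (c i))
    (hx : x ^ n + ∑ i ∈ Finset.range n, c i * x ^ i = 0) : (δ : WithTop Γ) < v x := by
  by_contra! hxδ
  obtain ⟨g, hg⟩ := WithTop.ne_top_iff_exists.mp (ne_top_of_le_ne_top WithTop.coe_ne_top hxδ)
  have hgδ : g ≤ δ := WithTop.coe_le_coe.mp (hg ▸ hxδ)
  have hpow : ∀ i, v (x ^ i) = ↑(i • g) := fun i => by
    rw [WithTop.coe_nsmul, hg, ← hv.toAddValuation_apply, AddValuation.map_pow]; rfl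
  have hterm : ∀ i ∈ Finset.range n, ((n • g : Γ) : WithTop Γ) < v (c i * x ^ i) := by
    intro i hi
    have hin := Finset.mem_range.mp hi
    have hle : (n - i) • g ≤ δ :=
      (nsmul_le_nsmul_left_of_nonpos (hgδ.trans hδ) (by omega : 1 ≤ n - i)).trans
        ((one_nsmul g).le.trans hgδ)
    rw [hv.map_mul, hpow, ← Nat.sub_add_cancel hin.le, add_nsmul, WithTop.coe_add]
    exact WithTop.add_lt_add_right WithTop.coe_ne_top
      ((WithTop.coe_le_coe.mpr hle).trans_lt (hc i hin))
  have hsum : v (x ^ n) < v (∑ i ∈ Finset.range n, c i * x ^ i) := by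
    rw [hpow]; exact hv.toAddValuation.map_lt_sum WithTop.coe_ne_top hterm
  have htop : v (x ^ n) = ⊤ := by
    rw [← hv.map_zero, ← hx]; exact (hv.toAddValuation.map_add_eq_of_lt_left hsum).symm
  exact WithTop.coe_ne_top ((hpow n).symm.trans htop)

theorem exists_map_mul_eq_zero (hv : IsValuation v) {x : R} (hx : v x ≠ ⊤) :
    ∃ z, v (x * z) = 0 := by
  obtain ⟨γ, hγ⟩ := WithTop.ne_top_iff_exists.mp hx
  obtain ⟨z, hz⟩ := hv.surjective ↑(-γ)
  exact ⟨z, by rw [hv.map_mul, ← hγ, hz, ← WithTop.coe_add, add_neg_cancel, WithTop.coe_zero]⟩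

end IsValuation

section Embedding

variable {R : Type*} [Ring R] {Γ : Type*} [AddCommGroup Γ] [LinearOrder Γ] [IsOrderedAddMonoid Γ]
  {Δ : Type*} [AddCommGroup Δ] [LinearOrder Δ] [IsOrderedAddMonoid Δ] {v : R → WithTop Γ}

theorem IsValuation.exists_addMonoidHom_of_le_iff (hv : IsValuation v)
    (u : AddValuation R (WithTop Δ)) (hle : ∀ x y, v x ≤ v y ↔ u x ≤ u y) :
    ∃ h : Γ →+ Δ, (∀ a b : Γ, a ≤ b ↔ h a ≤ h b) ∧ ∀ x : R, u x = WithTop.map h (v x) := by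
  have heq : ∀ x y, v x = v y → u x = u y := fun x y hxy =>
    le_antisymm ((hle x y).mp hxy.le) ((hle y x).mp hxy.ge)
  choose x hx using fun γ : Γ => hv.surjective γ
  have hfin : ∀ γ, u (x γ) ≠ ⊤ := fun γ htop => by
    have := (hle 0 (x γ)).mpr (by rw [htop]; exact le_top)
    rw [hv.map_zero, hx, top_le_iff] at this
    exact WithTop.coe_ne_top this
  let f : Γ → Δ := fun γ => (u (x γ)).untop (hfin γ)
  have hf : ∀ (γ : Γ) y, v y = γ → u y = f γ := fun γ y hy => by
    rw [WithTop.coe_untop, heq y (x γ) (hy.trans (hx γ).symm)]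
  have hadd : ∀ a b, f (a + b) = f a + f b := fun a b => by
    have hab : v (x a * x b) = ↑(a + b) := by rw [hv.map_mul, hx, hx, WithTop.coe_add]
    rw [← WithTop.coe_inj, WithTop.coe_add, ← hf _ _ hab, u.map_mul, hf a _ (hx a), hf b _ (hx b)]
  refine ⟨AddMonoidHom.mk' f hadd, fun a b => ?_, fun y => ?_⟩
  · rw [← WithTop.coe_le_coe, ← hx a, ← hx b, hle, hf a _ (hx a), hf b _ (hx b),
      WithTop.coe_le_coe]
    rfl
  · cases hy : v y with
    | top => rw [WithTop.map_top, heq y 0 (hy.trans hv.map_zero.symm), u.map_zero]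
    | coe γ => exact hf γ y hy

end Embedding

section Dominating

variable {R S : Type*} [Ring R] [Ring S]
  {Γ : Type*} [AddCommGroup Γ] [LinearOrder Γ] [IsOrderedAddMonoid Γ]
  {Δ : Type*} [AddCommGroup Δ] [LinearOrder Δ] [IsOrderedAddMonoid Δ]
  {v : R → WithTop Γ} {w : S → WithTop Δ} {ι : R →+* S}

theorem map_eq_zero_of_dominates (hA : valRing v ⊆ ι ⁻¹' valRing w)
    (hp : valIdeal v = valRing v ∩ ι ⁻¹' valIdeal w) {x : R} (hx : v x = 0) : w (ι x) = 0 := by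
  have hxA : x ∈ valRing v := hx.ge
  refine le_antisymm (not_lt.mp fun hpos => ?_) (hA hxA)
  have : x ∈ valIdeal v := hp ▸ ⟨hxA, hpos⟩
  exact (show (0 : WithTop Γ) < v x from this).ne' hx

theorem map_le_map_iff_of_dominates (hv : IsValuation v) (hw : IsValuation w)
    (hsupp : valSupp v ⊆ ι ⁻¹' valSupp w) (hA : valRing v ⊆ ι ⁻¹' valRing w)
    (hp : valIdeal v = valRing v ∩ ι ⁻¹' valIdeal w) (x y : R) :
    v x ≤ v y ↔ w (ι x) ≤ w (ι y) := by
  have hcancel : ∀ {a}, v a ≠ ⊤ →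
      ∃ z, v (a * z) = 0 ∧ w (ι a) + w (ι z) = 0 ∧ w (ι z) ≠ ⊤ := fun {a} ha => by
    obtain ⟨z, hz⟩ := hv.exists_map_mul_eq_zero ha
    have hxz : w (ι a) + w (ι z) = 0 := by
      rw [← hw.map_mul, ← map_mul]; exact map_eq_zero_of_dominates hA hp hz
    exact ⟨z, hz, hxz, fun htop => by simp [htop] at hxz⟩
  constructor
  · intro hxy
    by_cases hx : v x = ⊤
    · have hy : w (ι y) = ⊤ := hsupp (top_le_iff.mp (hx ▸ hxy))
      exact hy ▸ le_top
    obtain ⟨z, hz, hxz, hzfin⟩ := hcancel hx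
    have hyz : 0 ≤ v (y * z) := by
      rw [← hz, hv.map_mul, hv.map_mul]; exact add_le_add_left hxy _
    have hwyz : 0 ≤ w (ι y) + w (ι z) := by
      rw [← hw.map_mul, ← map_mul]; exact hA hyz
    rwa [← WithTop.add_le_add_iff_right hzfin, hxz]
  · intro hwxy
    by_contra! hyx
    obtain ⟨z, hz, hyz, hzfin⟩ := hcancel (ne_top_of_lt hyx)
    have hxz : 0 < v (x * z) := by
      have hvz : v z ≠ ⊤ := fun htop => by simp [hv.map_mul, htop] at hz
      rw [← hz, hv.map_mul, hv.map_mul]; exact WithTop.add_lt_add_right hvz hyx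
    have hwxz : 0 < w (ι x) + w (ι z) := by
      rw [← hw.map_mul, ← map_mul]; exact (hp.subset (show x * z ∈ valIdeal v from hxz)).2
    rw [← hyz, WithTop.add_lt_add_iff_right hzfin] at hwxz
    exact hwxz.not_ge hwxy

end Dominating

section Integral

variable {R S : Type*} [Ring R] [Ring S] {ℬ : ZMod 2 → AddSubgroup S}
  {Δ : Type*} [AddCommGroup Δ] [LinearOrder Δ] [IsOrderedAddMonoid Δ] {w : S → WithTop Δ}
  {ι : R →+* S}

theorem IsSuperring.exists_mem_zero_map_eq (hS : IsSuperring ℬ) (hw : IsValuation w)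
    (γ : WithTop Δ) : ∃ t ∈ ℬ 0, w t = γ := by
  obtain ⟨t, rfl⟩ := hw.surjective γ
  obtain ⟨t₀, ht₀, t₁, ht₁, rfl⟩ := hS.decompose t
  exact ⟨t₀, ht₀, (hw.map_add_of_map_eq_top t₀
    (hw.map_eq_top_of_mul_self_eq_zero (hS.odd_sq t₁ ht₁))).symm⟩

theorem IsSuperring.exists_map_le_of_isIntegral (hS : IsSuperring ℬ) (hw : IsValuation w)
    (hint : ∀ x ∈ ℬ 0, ∃ n : ℕ, ∃ a : ℕ → R, x ^ n + ∑ i ∈ Finset.range n, ι (a i) * x ^ i = 0)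
    (δ : Δ) : ∃ a : R, w (ι a) ≤ δ := by
  by_contra! hgt
  obtain ⟨t, ht, hwt⟩ := hS.exists_mem_zero_map_eq hw ↑(min δ 0)
  obtain ⟨n, a, hroot⟩ := hint t ht
  refine (hw.lt_map_of_monic_eq_zero (min_le_right δ 0) (fun i _ => ?_) hroot).ne hwt.symm
  exact (WithTop.coe_le_coe.mpr (min_le_left δ 0)).trans_lt (hgt (a i))

/-- If `w (ι x) = d` were finite for some `x ∈ supp v`, then `w (ι a) + d > 0` for every `a`,
so `w ∘ ι` would be bounded below by `-d`. -/
theorem IsSuperring.valSupp_subset_of_isIntegral (hS : IsSuperring ℬ) (hw : IsValuation w)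
    (hint : ∀ x ∈ ℬ 0, ∃ n : ℕ, ∃ a : ℕ → R, x ^ n + ∑ i ∈ Finset.range n, ι (a i) * x ^ i = 0)
    {Γ : Type*} [AddCommGroup Γ] [LinearOrder Γ] [IsOrderedAddMonoid Γ] {v : R → WithTop Γ}
    (hv : IsValuation v) (hp : valIdeal v ⊆ ι ⁻¹' valIdeal w) :
    valSupp v ⊆ ι ⁻¹' valSupp w := by
  intro x hx
  by_contra hne
  obtain ⟨d, hd⟩ := WithTop.ne_top_iff_exists.mp hne
  obtain ⟨a, ha⟩ := hS.exists_map_le_of_isIntegral hw hint (-d)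
  have hax : a * x ∈ valIdeal v :=
    show 0 < v (a * x) by rw [hv.map_mul, show v x = ⊤ from hx, add_top]; exact WithTop.coe_lt_top 0
  have hpos : 0 < w (ι a) + d := by rw [hd, ← hw.map_mul, ← map_mul]; exact hp hax
  have hnonpos : w (ι a) + d ≤ 0 := by
    calc w (ι a) + d ≤ ↑(-d) + ↑d := add_le_add_left ha _
      _ = 0 := by rw [← WithTop.coe_add, neg_add_cancel, WithTop.coe_zero]
  exact hpos.not_ge hnonpos

end Integral

theorem extension_of_dominating_on_integral_general {R S : Type u} [Ring R] [Ring S]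
    (ℬ : ZMod 2 → AddSubgroup S)
    (hS : IsSuperring ℬ)
    (ι : R →+* S)
    (hint : ∀ x ∈ ℬ 0, ∃ n : ℕ, 0 < n ∧ ∃ a : ℕ → R,
      x ^ n + ∑ i ∈ Finset.range n, ι (a i) * x ^ i = 0)
    {Γ : Type*} [AddCommGroup Γ] [LinearOrder Γ] [IsOrderedAddMonoid Γ] {Δ : Type*} [AddCommGroup Δ] [LinearOrder Δ] [IsOrderedAddMonoid Δ]
    (v : R → WithTop Γ) (hv : IsValuation v)
    (w : S → WithTop Δ) (hw : IsValuation w)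
    (hAA : valRing v ⊆ ι ⁻¹' valRing w)
    (hpp : valIdeal v = valRing v ∩ ι ⁻¹' valIdeal w) :
    (∀ s : S, ∀ x ∈ valSupp v, s * ι x ∈ valSupp w) ∧
      valSupp v ⊆ ι ⁻¹' valSupp w ∧
      ∃ h : Γ →+ Δ, (∀ a b : Γ, a ≤ b ↔ h a ≤ h b) ∧
        ∀ x : R, w (ι x) = WithTop.map (⇑h) (v x) := by
  have hsupp : valSupp v ⊆ ι ⁻¹' valSupp w :=
    hS.valSupp_subset_of_isIntegral hw (fun x hx => (hint x hx).imp fun _ h => h.2) hv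
      (hpp.subset.trans Set.inter_subset_right)
  obtain ⟨h, hh, hmap⟩ := hv.exists_addMonoidHom_of_le_iff (hw.toAddValuation.comap ι)
    (map_le_map_iff_of_dominates hv hw hsupp hAA hpp)
  refine ⟨fun s x hx => ?_, hsupp, h, hh, hmap⟩
  show w (s * ι x) = ⊤
  rw [hw.map_mul, show w (ι x) = ⊤ from hsupp hx, add_top]

/-- If `S` is integral over its subsuperring `R` and the valuation pair of `w` on
`S` dominates that of `v` on `R`, then `S·supp v ⊆ supp w`; in particular
`supp v ⊆ supp w`, so `w` is an extension of `v` to `S`. -/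
theorem extension_of_dominating_on_integral {R S : Type u} [Ring R] [Ring S]
    [Nontrivial R] [Nontrivial S]
    (𝒜 : ZMod 2 → AddSubgroup R) (ℬ : ZMod 2 → AddSubgroup S)
    (hR : IsSuperring 𝒜) (hS : IsSuperring ℬ)
    (ι : R →+* S) (hinj : Function.Injective ι)
    (hgrade : ∀ (i : ZMod 2) (x : R), x ∈ 𝒜 i ↔ ι x ∈ ℬ i)
    (hint : ∀ x ∈ ℬ 0, ∃ n : ℕ, 0 < n ∧ ∃ a : ℕ → R,
      x ^ n + ∑ i ∈ Finset.range n, ι (a i) * x ^ i = 0)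
    {Γ : Type*} [AddCommGroup Γ] [LinearOrder Γ] [IsOrderedAddMonoid Γ] {Δ : Type*} [AddCommGroup Δ] [LinearOrder Δ] [IsOrderedAddMonoid Δ]
    (v : R → WithTop Γ) (hv : IsValuation v)
    (w : S → WithTop Δ) (hw : IsValuation w)
    (hAA : valRing v ⊆ ι ⁻¹' valRing w)
    (hpp : valIdeal v = valRing v ∩ ι ⁻¹' valIdeal w) :
    (∀ s : S, ∀ x ∈ valSupp v, s * ι x ∈ valSupp w) ∧
      valSupp v ⊆ ι ⁻¹' valSupp w ∧
      ∃ h : Γ →+ Δ, (∀ a b : Γ, a ≤ b ↔ h a ≤ h b) ∧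
        ∀ x : R, w (ι x) = WithTop.map (⇑h) (v x) :=
  extension_of_dominating_on_integral_general ℬ hS ι hint v hv w hw hAA hpp
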